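/- Suppose cosh r evolves along a flow by (∂/∂t − Δ)cosh r = (cosh r)^{-1}(1 − ⟨ν_E, z⟩_E²) − (n − σ⟨ν_E, e⟩_E)cosh r − σ⟨ν_E, z⟩_E, with σ ≥ 0, cosh r ≥ 1, |⟨ν_E, z⟩_E| ≤ 1, |⟨ν_E, e⟩_E| ≤ 1. Then for any R > 0, the function η = cosh R − e^{(n+σ)t}(cosh r + σ/(n+σ)) satisfies (∂/∂t − Δ)η ≤ 0. -/
import Mathlib

/-- Supersolution property of the space-time cut-off function for the MMCF. With
`c = cosh r ≥ 1`, `p = ⟨ν_E, z⟩_E`, `q = ⟨ν_E, e⟩_E`, `|p| ≤ 1`, `|q| ≤ 1`, `σ ≥ 0`, if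
`(∂/∂t − Δ)cosh r = c⁻¹(1 − p²) − (n − σq)c − σp`, then for any `R > 0` the function
`η = cosh R − e^{(n+σ)t}(cosh r + σ/(n+σ))` satisfies
`(∂/∂t − Δ)η = −e^{(n+σ)t}((n+σ)c + σ + (∂/∂t − Δ)cosh r) ≤ 0`. -/
theorem stmt13 (n : ℕ) (σ R t c p q heatC heatη : ℝ)
    (hσ : 0 ≤ σ) (hR : 0 < R) (hc : 1 ≤ c) (hp : |p| ≤ 1) (hq : |q| ≤ 1)
    (hheatC : heatC = c⁻¹ * (1 - p ^ 2) - ((n : ℝ) - σ * q) * c - σ * p)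
    (hheatη : heatη = -(Real.exp (((n : ℝ) + σ) * t)) * (((n : ℝ) + σ) * c + σ + heatC)) :
    heatη ≤ 0 := by
  subst hheatC hheatη
  have hp1 := abs_le.mp hp
  have hq1 := abs_le.mp hq
  have hc0 : (0:ℝ) < c := lt_of_lt_of_le one_pos hc
  have hinv : (0:ℝ) ≤ c⁻¹ := le_of_lt (inv_pos.mpr hc0)
  have hkey : (0:ℝ) ≤ ((n : ℝ) + σ) * c + σ +
      (c⁻¹ * (1 - p ^ 2) - ((n : ℝ) - σ * q) * c - σ * p) := by
    have h1 : (0:ℝ) ≤ c⁻¹ * (1 - p ^ 2) := mul_nonneg hinv (by nlinarith [hp1.1, hp1.2])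
    nlinarith [mul_nonneg hσ (mul_nonneg hc0.le (by linarith [hq1.1] : (0:ℝ) ≤ 1 + q))]
  have := Real.exp_pos (((n : ℝ) + σ) * t)
  nlinarith
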